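/- arXiv:1810.00468 — 2 statements merged into one kernel-verified Lean document; each statement's English description precedes it below -/
import Mathlib

section
/- Suppose discrete finite state and action spaces, deterministic transitions p(s'|s,α) = δ(s' = d(s,α)) for a transition function d : S × A → S, and π_0(α|s) > 0 for all s, α. Let B_β satisfy B_β(s,α) = exp(β r(s,α)) π_0(α|s) Σ_{α'} B_β(d(s,α), α') (unfolded over a finite horizon with terminal condition Σ_α B_β(s,α) = 1 at terminal states). Then as β → ∞, (1/β) log B_β(s,α) converges to the optimal state-action value Q_*(s,α) satisfying Q_*(s,α) = r(s,α) + max_{α'} Q_*(d(s,α), α') with Q_*(s,α) = 0 for terminal s. -/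
open Finset Real Filter

/-- `Bβ β m s a`: the probabilistic-RL state-action value with `m` remaining further steps
under deterministic dynamics `d`, unfolded over a finite horizon with the terminal
condition `Σ_α B(s,α) = 1` at the end of the horizon:
`B_β(s,α) = exp(β r(s,α)) π0(α|s) Σ_{α'} B_β(d(s,α), α')`. -/
noncomputable def detB {S A : Type*} [Fintype A]
    (π0 : S → A → ℝ) (d : S → A → S) (r : S → A → ℝ) (β : ℝ) :
    ℕ → S → A → ℝ
  | 0, _, _ => 1 / (Fintype.card A : ℝ)
  | m + 1, s, a => Real.exp (β * r s a) * π0 s a * ∑ a', detB π0 d r β m (d s a) a'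

/-- The optimal state-action value of regular RL:
`Q_*(s,α) = r(s,α) + max_{α'} Q_*(d(s,α),α')`, equal to `0` at the end of the horizon. -/
noncomputable def detQ {S A : Type*} [Fintype A] [Nonempty A]
    (d : S → A → S) (r : S → A → ℝ) : ℕ → S → A → ℝ
  | 0, _, _ => 0
  | m + 1, s, a =>
      r s a + Finset.univ.sup' Finset.univ_nonempty (fun a' => detQ d r m (d s a) a')

lemma detB_pos {S A : Type*} [Fintype A] [Nonempty A]
    (π0 : S → A → ℝ) (d : S → A → S) (r : S → A → ℝ) (β : ℝ)
    (hπ : ∀ s a, 0 < π0 s a) :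
    ∀ (m : ℕ) (s : S) (a : A), 0 < detB π0 d r β m s a := by
  intro m
  induction m with
  | zero =>
    intro s a
    simp [detB]
    positivity
  | succ m ih =>
    intro s a
    simp only [detB]
    have hsum : 0 < ∑ a', detB π0 d r β m (d s a) a' :=
      Finset.sum_pos (fun a' _ => ih (d s a) a') Finset.univ_nonempty
    exact mul_pos (mul_pos (Real.exp_pos _) (hπ s a)) hsum

lemma logsumexp_tendsto {A : Type*} [Fintype A] [Nonempty A]
    (g : ℝ → A → ℝ) (Q : A → ℝ)
    (hpos : ∀ β a, 0 < g β a)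
    (h : ∀ a, Tendsto (fun β => (1 / β) * Real.log (g β a)) atTop (nhds (Q a))) :
    Tendsto (fun β => (1 / β) * Real.log (∑ a, g β a)) atTop
      (nhds (Finset.univ.sup' Finset.univ_nonempty Q)) := by
  set lo : ℝ → ℝ := fun β =>
    Finset.univ.sup' Finset.univ_nonempty (fun a => (1 / β) * Real.log (g β a)) with hlo
  have hlotend : Tendsto lo atTop (nhds (Finset.univ.sup' Finset.univ_nonempty Q)) :=
    Filter.Tendsto.finset_sup'_nhds_apply Finset.univ_nonempty (fun a _ => h a)
  have hKtend : Tendsto (fun β : ℝ => (1 / β) * Real.log (Fintype.card A)) atTop (nhds 0) := by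
    simpa using (tendsto_inv_atTop_zero (𝕜 := ℝ)).mul_const (Real.log (Fintype.card A))
  have hhitend : Tendsto (fun β => (1 / β) * Real.log (Fintype.card A) + lo β) atTop
      (nhds (Finset.univ.sup' Finset.univ_nonempty Q)) := by
    simpa using hKtend.add hlotend
  apply tendsto_of_tendsto_of_tendsto_of_le_of_le' hlotend hhitend
  · filter_upwards [eventually_gt_atTop (0 : ℝ)] with β hβ
    apply Finset.sup'_le
    intro a _
    have hle : g β a ≤ ∑ a', g β a' :=
      Finset.single_le_sum (fun a' _ => (hpos β a').le) (Finset.mem_univ a)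
    exact mul_le_mul_of_nonneg_left (Real.log_le_log (hpos β a) hle)
      (by positivity)
  · filter_upwards [eventually_gt_atTop (0 : ℝ)] with β hβ
    obtain ⟨a₀, _, ha₀⟩ := Finset.exists_mem_eq_sup' (Finset.univ_nonempty (α := A)) (g β)
    have hsum_le : ∑ a, g β a ≤ (Fintype.card A : ℝ) * g β a₀ := by
      calc ∑ a, g β a ≤ ∑ _a : A, g β a₀ :=
            Finset.sum_le_sum (fun a _ => ha₀ ▸ Finset.le_sup' (g β) (Finset.mem_univ a))
        _ = (Fintype.card A : ℝ) * g β a₀ := by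
            simp [Finset.sum_const, nsmul_eq_mul, Finset.card_univ]
    have hcard : (0:ℝ) < (Fintype.card A : ℝ) := by
      exact_mod_cast Fintype.card_pos
    have hlog : Real.log (∑ a, g β a) ≤ Real.log (Fintype.card A) + Real.log (g β a₀) := by
      calc Real.log (∑ a, g β a) ≤ Real.log ((Fintype.card A : ℝ) * g β a₀) :=
            Real.log_le_log (Finset.sum_pos (fun a _ => hpos β a) Finset.univ_nonempty) hsum_le
        _ = Real.log (Fintype.card A) + Real.log (g β a₀) :=
            Real.log_mul hcard.ne' (hpos β a₀).ne'
    have h1 : (1 / β) * Real.log (∑ a, g β a) ≤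
        (1 / β) * (Real.log (Fintype.card A) + Real.log (g β a₀)) :=
      mul_le_mul_of_nonneg_left hlog (by positivity)
    have h2 : (1 / β) * Real.log (g β a₀) ≤ lo β :=
      Finset.le_sup' (fun a => (1 / β) * Real.log (g β a)) (Finset.mem_univ a₀)
    nlinarith
  
/-- For deterministic transitions and a strictly positive baseline policy `π0`, as
`β → ∞` the quantity `(1/β) log B_β(s,α)` converges to the optimal state-action value
`Q_*(s,α)` of regular reinforcement learning. -/
theorem detB_tendsto_Qstar {S A : Type*} [Fintype S] [Fintype A] [Nonempty A]
    (π0 : S → A → ℝ) (d : S → A → S) (r : S → A → ℝ)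
    (hπ : ∀ s a, 0 < π0 s a) :
    ∀ (m : ℕ) (s : S) (a : A),
      Tendsto (fun β : ℝ => (1 / β) * Real.log (detB π0 d r β m s a))
        atTop (nhds (detQ d r m s a)) := by
  intro m
  induction m with
  | zero =>
    intro s a
    simp only [detB, detQ]
    have : Tendsto (fun β : ℝ => (1 / β) * Real.log (1 / (Fintype.card A : ℝ)))
        atTop (nhds 0) := by
      simpa using (tendsto_inv_atTop_zero (𝕜 := ℝ)).mul_const
        (Real.log (1 / (Fintype.card A : ℝ)))
    exact this
  | succ m ih =>
    intro s a
    have hsum : Tendsto (fun β => (1 / β) * Real.log (∑ a', detB π0 d r β m (d s a) a'))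
        atTop (nhds (Finset.univ.sup' Finset.univ_nonempty (fun a' => detQ d r m (d s a) a'))) :=
      logsumexp_tendsto (fun β a' => detB π0 d r β m (d s a) a')
        (fun a' => detQ d r m (d s a) a')
        (fun β a' => detB_pos π0 d r β hπ m (d s a) a') (fun a' => ih (d s a) a')
    have hπ0 : Tendsto (fun β : ℝ => (1 / β) * Real.log (π0 s a)) atTop (nhds 0) := by
      simpa using (tendsto_inv_atTop_zero (𝕜 := ℝ)).mul_const (Real.log (π0 s a))
    have hmain : Tendsto
        (fun β : ℝ => r s a + ((1 / β) * Real.log (π0 s a) +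
          (1 / β) * Real.log (∑ a', detB π0 d r β m (d s a) a')))
        atTop (nhds (detQ d r (m + 1) s a)) := by
      have := tendsto_const_nhds (x := r s a) (f := atTop (α := ℝ)) |>.add (hπ0.add hsum)
      simpa [detQ] using this
    apply hmain.congr'
    filter_upwards [eventually_gt_atTop (0 : ℝ)] with β hβ
    have hsumpos : 0 < ∑ a', detB π0 d r β m (d s a) a' :=
      Finset.sum_pos (fun a' _ => detB_pos π0 d r β hπ m (d s a) a') Finset.univ_nonempty
    have hexp : (0:ℝ) < Real.exp (β * r s a) := Real.exp_pos _
    simp only [detB]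
    rw [Real.log_mul (mul_pos hexp (hπ s a)).ne' hsumpos.ne',
      Real.log_mul hexp.ne' (hπ s a).ne', Real.log_exp]
    field_simp
    ring
end

section
/- In a Markov chain of states and actions generated by α_t ~ p(α_t | s_t) depending functionally on future rewards, conditioning on the current state s_t renders α_t independent of all earlier states, actions, and rewards: p(α_t | s_{0:t}, α_{0:t-1}, r_{0:h-1}) = p(α_t | s_t, r_{t:h-1}), where the joint is given by the reward-weighted posterior p(α_{0:h-1}, s_{1:h} | s_0) ∝ exp(β Σ_t r_t) Π_t π_0(α_t|s_t) p(s_{t+1}|s_t, α_t) with r_t = r(s_t, α_t) deterministic functions. -/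
open Finset Real

/-- The weight of a trajectory `(α_{0:h-1}, s_{1:h})` starting at `s0` under the
reward-weighted posterior: `exp(β Σ_t r_t) · Π_t π0(α_t|s_t) p(s_{t+1}|s_t,α_t)`. -/
noncomputable def trajW {S A : Type*} [Fintype S] [Fintype A]
    (π0 : S → A → ℝ) (p : S → A → S → ℝ) (r : S → A → ℝ) (β : ℝ)
    (h : ℕ) (s0 : S) (a : Fin h → A) (σ : Fin h → S) : ℝ :=
  let st : Fin (h + 1) → S := Fin.cons s0 σ
  ∏ t : Fin h,
    Real.exp (β * r (st t.castSucc) (a t)) *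
      π0 (st t.castSucc) (a t) *
      p (st t.castSucc) (a t) (σ t)

open Classical in
/-- Total posterior weight of the trajectories agreeing with the history
`(s0, α_{0:t-1}, s_{1:t})` up to (not including) time `t` and whose action at time `t`
satisfies `P`. -/
noncomputable def histSum {S A : Type*} [Fintype S] [Fintype A]
    (π0 : S → A → ℝ) (p : S → A → S → ℝ) (r : S → A → ℝ) (β : ℝ)
    (h : ℕ) (s0 : S) (apre : Fin h → A) (σpre : Fin h → S) (t : Fin h)
    (P : A → Prop) : ℝ :=
  ∑ a : Fin h → A, ∑ σ : Fin h → S,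
    if (∀ i : Fin h, i < t → a i = apre i ∧ σ i = σpre i) ∧ P (a t)
    then trajW π0 p r β h s0 a σ else 0



/-- previous state at time `i ≥ t`, given current state `scur` at time `t`. -/
def prevFn {S : Type*} {h : ℕ} (scur : S) (t : Fin h) (σ : Fin h → S) (i : Fin h) : S :=
  if t < i then σ ⟨i.val - 1, Nat.lt_of_le_of_lt (Nat.sub_le _ _) i.isLt⟩ else scur

noncomputable def tailW {S A : Type*} [Fintype S] [Fintype A]
    (π0 : S → A → ℝ) (p : S → A → S → ℝ) (r : S → A → ℝ) (β : ℝ)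
    (h : ℕ) (scur : S) (t : Fin h) (a : Fin h → A) (σ : Fin h → S) : ℝ :=
  ∏ i ∈ univ.filter (fun i : Fin h => t ≤ i),
    Real.exp (β * r (prevFn scur t σ i) (a i)) *
      π0 (prevFn scur t σ i) (a i) *
      p (prevFn scur t σ i) (a i) (σ i)

lemma cons_castSucc_zero {S : Type*} {h : ℕ} (s0 : S) (σ : Fin h → S) (i : Fin h)
    (hi : i.val = 0) : (Fin.cons s0 σ : Fin (h+1) → S) i.castSucc = s0 := by
  have : i.castSucc = 0 := by ext; simpa using hi
  rw [this, Fin.cons_zero]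

lemma cons_castSucc_pos {S : Type*} {h : ℕ} (s0 : S) (σ : Fin h → S) (i : Fin h)
    (hi : 0 < i.val) :
    (Fin.cons s0 σ : Fin (h+1) → S) i.castSucc
      = σ ⟨i.val - 1, Nat.lt_of_le_of_lt (Nat.sub_le _ _) i.isLt⟩ := by
  have : i.castSucc = Fin.succ ⟨i.val - 1, Nat.lt_of_le_of_lt (Nat.sub_le _ _) i.isLt⟩ := by
    ext; simp [Fin.val_succ]; omega
  rw [this, Fin.cons_succ]

noncomputable def preC {S A : Type*} [Fintype S] [Fintype A]
    (π0 : S → A → ℝ) (p : S → A → S → ℝ) (r : S → A → ℝ) (β : ℝ)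
    (h : ℕ) (s0 : S) (apre : Fin h → A) (σpre : Fin h → S) (t : Fin h) : ℝ :=
  ∏ i ∈ univ.filter (fun i : Fin h => i < t),
    Real.exp (β * r ((Fin.cons s0 σpre : Fin (h+1) → S) i.castSucc) (apre i)) *
      π0 ((Fin.cons s0 σpre : Fin (h+1) → S) i.castSucc) (apre i) *
      p ((Fin.cons s0 σpre : Fin (h+1) → S) i.castSucc) (apre i) (σpre i)

lemma cons_agree {S : Type*} {h : ℕ} (s0 : S) (σ σpre : Fin h → S) (t : Fin h)
    (hc : ∀ i : Fin h, i < t → σ i = σpre i) (i : Fin h) (hi : i ≤ t) :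
    (Fin.cons s0 σ : Fin (h+1) → S) i.castSucc
      = (Fin.cons s0 σpre : Fin (h+1) → S) i.castSucc := by
  rcases Nat.eq_zero_or_pos i.val with h0 | h0
  · rw [cons_castSucc_zero _ _ _ h0, cons_castSucc_zero _ _ _ h0]
  · rw [cons_castSucc_pos _ _ _ h0, cons_castSucc_pos _ _ _ h0]
    exact hc _ (by rw [Fin.lt_def]; rw [Fin.le_def] at hi; simp; omega)

lemma trajW_factor {S A : Type*} [Fintype S] [Fintype A]
    (π0 : S → A → ℝ) (p : S → A → S → ℝ) (r : S → A → ℝ) (β : ℝ)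
    (h : ℕ) (s0 : S) (apre a : Fin h → A) (σpre σ : Fin h → S) (t : Fin h)
    (hc : ∀ i : Fin h, i < t → a i = apre i ∧ σ i = σpre i) :
    trajW π0 p r β h s0 a σ
      = preC π0 p r β h s0 apre σpre t
        * tailW π0 p r β h ((Fin.cons s0 σpre : Fin (h+1) → S) t.castSucc) t a σ := by
  unfold trajW preC tailW
  rw [← Finset.prod_filter_mul_prod_filter_not univ (fun i : Fin h => i < t)]
  congr 1
  · refine Finset.prod_congr rfl fun i hi => ?_
    simp only [mem_filter] at hi
    obtain ⟨hai, hσi⟩ := hc i hi.2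
    rw [cons_agree s0 σ σpre t (fun j hj => (hc j hj).2) i (le_of_lt hi.2), hai, hσi]
  · rw [show (univ.filter (fun i : Fin h => ¬ i < t)) = univ.filter (fun i => t ≤ i) by
      apply Finset.filter_congr; intro i _; simp [not_lt]]
    refine Finset.prod_congr rfl fun i hi => ?_
    simp only [mem_filter] at hi
    have hprev : (Fin.cons s0 σ : Fin (h+1) → S) i.castSucc = prevFn ((Fin.cons s0 σpre : Fin (h+1) → S) t.castSucc) t σ i := by
      unfold prevFn
      by_cases hlt : t < i
      · rw [if_pos hlt]
        exact cons_castSucc_pos _ _ _ (by rw [Fin.lt_def] at hlt; omega)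
      · rw [if_neg hlt]
        have : i = t := le_antisymm (not_lt.mp hlt) hi.2
        subst this
        exact cons_agree s0 σ σpre i (fun j hj => (hc j hj).2) i le_rfl
    rw [hprev]

open Classical in
noncomputable def tailSum {S A : Type*} [Fintype S] [Fintype A]
    (π0 : S → A → ℝ) (p : S → A → S → ℝ) (r : S → A → ℝ) (β : ℝ)
    (h : ℕ) (scur : S) (apre : Fin h → A) (σpre : Fin h → S) (t : Fin h)
    (P : A → Prop) : ℝ :=
  ∑ a : Fin h → A, ∑ σ : Fin h → S,
    if (∀ i : Fin h, i < t → a i = apre i ∧ σ i = σpre i) ∧ P (a t)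
    then tailW π0 p r β h scur t a σ else 0

lemma histSum_factor {S A : Type*} [Fintype S] [Fintype A]
    (π0 : S → A → ℝ) (p : S → A → S → ℝ) (r : S → A → ℝ) (β : ℝ)
    (h : ℕ) (s0 : S) (apre : Fin h → A) (σpre : Fin h → S) (t : Fin h)
    (P : A → Prop) :
    histSum π0 p r β h s0 apre σpre t P
      = preC π0 p r β h s0 apre σpre t
        * tailSum π0 p r β h ((Fin.cons s0 σpre : Fin (h+1) → S) t.castSucc) apre σpre t P := by
  unfold histSum tailSum
  rw [Finset.mul_sum]
  refine Finset.sum_congr rfl fun a _ => ?_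
  rw [Finset.mul_sum]
  refine Finset.sum_congr rfl fun σ _ => ?_
  by_cases hcond : (∀ i : Fin h, i < t → a i = apre i ∧ σ i = σpre i) ∧ P (a t)
  · rw [if_pos hcond, if_pos hcond, trajW_factor π0 p r β h s0 apre a σpre σ t hcond.1]
  · rw [if_neg hcond, if_neg hcond, mul_zero]

lemma tailW_congr {S A : Type*} [Fintype S] [Fintype A]
    (π0 : S → A → ℝ) (p : S → A → S → ℝ) (r : S → A → ℝ) (β : ℝ)
    (h : ℕ) (scur : S) (t : Fin h) (a a' : Fin h → A) (σ σ' : Fin h → S)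
    (ha : ∀ i : Fin h, t ≤ i → a i = a' i) (hσ : ∀ i : Fin h, t ≤ i → σ i = σ' i) :
    tailW π0 p r β h scur t a σ = tailW π0 p r β h scur t a' σ' := by
  unfold tailW
  refine Finset.prod_congr rfl fun i hi => ?_
  simp only [mem_filter] at hi
  have hprev : prevFn scur t σ i = prevFn scur t σ' i := by
    unfold prevFn
    by_cases hlt : t < i
    · rw [if_pos hlt, if_pos hlt]
      exact hσ _ (by rw [Fin.lt_def] at hlt; rw [Fin.le_def]; simp; omega)
    · rw [if_neg hlt, if_neg hlt]
  rw [hprev, ha i hi.2, hσ i hi.2]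

open Classical in
lemma tailSum_indep {S A : Type*} [Fintype S] [Fintype A]
    (π0 : S → A → ℝ) (p : S → A → S → ℝ) (r : S → A → ℝ) (β : ℝ)
    (h : ℕ) (scur : S) (apre1 apre2 : Fin h → A) (σpre1 σpre2 : Fin h → S) (t : Fin h)
    (P : A → Prop) :
    tailSum π0 p r β h scur apre1 σpre1 t P = tailSum π0 p r β h scur apre2 σpre2 t P := by
  have e1 : ∀ (apre : Fin h → A) (σpre : Fin h → S),
      (∑ x ∈ Finset.univ.filter (fun x : (Fin h → A) × (Fin h → S) =>
          (∀ i : Fin h, i < t → x.1 i = apre i ∧ x.2 i = σpre i) ∧ P (x.1 t)),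
        tailW π0 p r β h scur t x.1 x.2)
      = tailSum π0 p r β h scur apre σpre t P := by
    intro apre σpre
    unfold tailSum
    rw [Finset.sum_filter, Fintype.sum_prod_type]
  rw [← e1 apre1 σpre1, ← e1 apre2 σpre2]
  refine Finset.sum_nbij'
    (i := fun x => (fun j => if j < t then apre2 j else x.1 j,
                    fun j => if j < t then σpre2 j else x.2 j))
    (j := fun x => (fun j => if j < t then apre1 j else x.1 j,
                    fun j => if j < t then σpre1 j else x.2 j))
    ?_ ?_ ?_ ?_ ?_
  · intro x hx
    simp only [mem_filter, mem_univ, true_and] at hx ⊢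
    refine ⟨fun i hi => ⟨if_pos hi, if_pos hi⟩, ?_⟩
    simpa [if_neg (lt_irrefl t)] using hx.2
  · intro x hx
    simp only [mem_filter, mem_univ, true_and] at hx ⊢
    refine ⟨fun i hi => ⟨if_pos hi, if_pos hi⟩, ?_⟩
    simpa [if_neg (lt_irrefl t)] using hx.2
  · intro x hx
    simp only [mem_filter, mem_univ, true_and] at hx
    ext j
    · simp only
      by_cases hj : j < t
      · rw [if_pos hj]; exact ((hx.1 j hj).1).symm
      · rw [if_neg hj, if_neg hj]
    · simp only
      by_cases hj : j < t
      · rw [if_pos hj]; exact ((hx.1 j hj).2).symm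
      · rw [if_neg hj, if_neg hj]
  · intro x hx
    simp only [mem_filter, mem_univ, true_and] at hx
    ext j
    · simp only
      by_cases hj : j < t
      · rw [if_pos hj]; exact ((hx.1 j hj).1).symm
      · rw [if_neg hj, if_neg hj]
    · simp only
      by_cases hj : j < t
      · rw [if_pos hj]; exact ((hx.1 j hj).2).symm
      · rw [if_neg hj, if_neg hj]
  · intro x hx
    exact tailW_congr π0 p r β h scur t _ _ _ _
      (fun i hi => (if_neg (not_lt.mpr hi)).symm)
      (fun i hi => (if_neg (not_lt.mpr hi)).symm)

/-- Markov property of the reward-weighted posterior: conditional on the whole history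
`(s_{0:t}, α_{0:t-1})` (and the rewards, which are deterministic functions of the
trajectory), the action `α_t` is independent of all earlier states and actions — its
conditional distribution depends only on the current state `s_t`. Formally, two
histories sharing the same current state at time `t` yield the same conditional
probability for `α_t = a`. -/
theorem posterior_action_markov {S A : Type*} [Fintype S] [Fintype A]
    (π0 : S → A → ℝ) (p : S → A → S → ℝ) (r : S → A → ℝ) (β : ℝ) (h : ℕ)
    (hπpos : ∀ s a, 0 < π0 s a) (hπsum : ∀ s, ∑ a, π0 s a = 1)
    (hppos : ∀ s a s', 0 ≤ p s a s') (hpsum : ∀ s a, ∑ s', p s a s' = 1)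
    (hβ : 0 < β)
    (t : Fin h) (aa : A)
    (s01 s02 : S) (apre1 apre2 : Fin h → A) (σpre1 σpre2 : Fin h → S)
    (hsame : (Fin.cons s01 σpre1 : Fin (h + 1) → S) t.castSucc
           = (Fin.cons s02 σpre2 : Fin (h + 1) → S) t.castSucc)
    (hD1 : 0 < histSum π0 p r β h s01 apre1 σpre1 t (fun _ => True))
    (hD2 : 0 < histSum π0 p r β h s02 apre2 σpre2 t (fun _ => True)) :
    histSum π0 p r β h s01 apre1 σpre1 t (fun x => x = aa)
        / histSum π0 p r β h s01 apre1 σpre1 t (fun _ => True)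
      = histSum π0 p r β h s02 apre2 σpre2 t (fun x => x = aa)
        / histSum π0 p r β h s02 apre2 σpre2 t (fun _ => True) := by
  classical
  have h1 : ∀ P : A → Prop, histSum π0 p r β h s01 apre1 σpre1 t P
      = preC π0 p r β h s01 apre1 σpre1 t
        * tailSum π0 p r β h ((Fin.cons s01 σpre1 : Fin (h+1) → S) t.castSucc) apre1 σpre1 t P :=
    fun P => histSum_factor π0 p r β h s01 apre1 σpre1 t P
  have h2 : ∀ P : A → Prop, histSum π0 p r β h s02 apre2 σpre2 t P
      = preC π0 p r β h s02 apre2 σpre2 t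
        * tailSum π0 p r β h ((Fin.cons s01 σpre1 : Fin (h+1) → S) t.castSucc) apre1 σpre1 t P := by
    intro P
    rw [histSum_factor π0 p r β h s02 apre2 σpre2 t P, ← hsame,
      tailSum_indep π0 p r β h _ apre2 apre1 σpre2 σpre1 t P]
  have hC1 : preC π0 p r β h s01 apre1 σpre1 t ≠ 0 := by
    intro h0
    rw [h1 _, h0, zero_mul] at hD1
    exact lt_irrefl 0 hD1
  have hC2 : preC π0 p r β h s02 apre2 σpre2 t ≠ 0 := by
    intro h0
    rw [h2 _, h0, zero_mul] at hD2
    exact lt_irrefl 0 hD2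
  rw [h1, h1, h2, h2, mul_div_mul_left _ _ hC1, mul_div_mul_left _ _ hC2]
end
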